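/- For every nonassociative word w in X*, the image of w in the free right-symmetric algebra A = RS⟨x_1,…,x_n⟩ is nonzero and its leading word w̄ satisfies w̄ ≤ w; moreover, w̄ = w holds if and only if w is a good word. -/

import Mathlib

namespace RS

/-- The degree of a nonassociative word. -/
def deg {X : Type*} : FreeMagma X → ℕ
  | .of _ => 1
  | .mul u v => deg u + deg v

/-- The order on nonassociative words: `u < v` if `d u < d v`; words of equal degree 1 are
compared in `X`; words `u = u₁u₂`, `v = v₁v₂` of equal degree `≥ 2` are compared
lexicographically. -/
def wlt {X : Type*} [LinearOrder X] : FreeMagma X → FreeMagma X → Prop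
  | .of a, .of b => a < b
  | .of _, .mul _ _ => True
  | .mul _ _, .of _ => False
  | .mul u₁ u₂, .mul v₁ v₂ =>
      deg (FreeMagma.mul u₁ u₂) < deg (FreeMagma.mul v₁ v₂) ∨
        (deg (FreeMagma.mul u₁ u₂) = deg (FreeMagma.mul v₁ v₂) ∧
          (wlt u₁ v₁ ∨ (u₁ = v₁ ∧ wlt u₂ v₂)))

/-- `u ≤ v` on nonassociative words. -/
def wle {X : Type*} [LinearOrder X] (u v : FreeMagma X) : Prop := wlt u v ∨ u = v

/-- A word is good if it contains no subword `(rs)t` with `s > t`. -/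
def IsGood {X : Type*} [LinearOrder X] : FreeMagma X → Prop
  | .of _ => True
  | .mul (.of _) v => IsGood v
  | .mul (.mul u₁ u₂) v =>
      IsGood (FreeMagma.mul u₁ u₂) ∧ IsGood v ∧ ¬ wlt v u₂

/-- Evaluation of a nonassociative word at values `x` in a magma `A`. -/
def evalWord {X A : Type*} [Mul A] (x : X → A) : FreeMagma X → A
  | .of a => x a
  | .mul u v => evalWord x u * evalWord x v

/-- Data exhibiting a nonunital nonassociative `k`-algebra `A` as the free right-symmetric
algebra `RS⟨x_1,…,x_n⟩`: `A` satisfies the right-symmetric identity and the images of the good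
words form a `k`-linear basis (Segal's theorem). -/
structure FreeRSData (k : Type*) [Field k] (n : ℕ) (A : Type*)
    [NonUnitalNonAssocRing A] [Module k A] where
  rightSymm : ∀ a b c : A, (a * b) * c - a * (b * c) = (a * c) * b - a * (c * b)
  x : Fin n → A
  basis : Module.Basis {w : FreeMagma (Fin n) // IsGood w} k A
  basis_eq : ∀ w : {w : FreeMagma (Fin n) // IsGood w}, basis w = evalWord x w.1

/-- `w` is the leading word of `f`: it is a good word occurring in the representation of `f`
in the basis of good words, and every other good word occurring there is smaller. -/
def IsLeadingWord {k : Type*} [Field k] {n : ℕ} {A : Type*} [NonUnitalNonAssocRing A]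
    [Module k A] (D : FreeRSData k n A) (f : A) (w : FreeMagma (Fin n)) : Prop :=
  ∃ hw : IsGood w,
    (⟨w, hw⟩ : {u : FreeMagma (Fin n) // IsGood u}) ∈ (D.basis.repr f).support ∧
      ∀ u ∈ (D.basis.repr f).support, u.1 ≠ w → wlt u.1 w

/-- The left-normed word `x R_{w_1} ⋯ R_{w_m} = (…((x w_1) w_2) … w_m)`. -/
def leftNormed {X : Type*} (a : FreeMagma X) (l : List (FreeMagma X)) : FreeMagma X :=
  l.foldl FreeMagma.mul a

/-- The degree of a word in the variable `a`. -/
def countVar {X : Type*} [DecidableEq X] (a : X) : FreeMagma X → ℕ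
  | .of b => if b = a then 1 else 0
  | .mul u v => countVar a u + countVar a v

/-- The two-sided ideal of the nonunital nonassociative `k`-algebra `A` generated by `f`. -/
def idealGen (k : Type*) [Field k] {A : Type*} [NonUnitalNonAssocRing A] [Module k A]
    (f : A) : Submodule k A :=
  sInf {I : Submodule k A | f ∈ I ∧ ∀ a : A, ∀ y ∈ I, a * y ∈ I ∧ y * a ∈ I}

/-- A pair of (nonzero) elements `f, g` is reducible if there is a good word `s` in a single
variable with `s(f̄) = ḡ` or `s(ḡ) = f̄`. -/
def Reducible {k : Type*} [Field k] {n : ℕ} {A : Type*} [NonUnitalNonAssocRing A]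
    [Module k A] (D : FreeRSData k n A) (f g : A) : Prop :=
  ∃ wf wg : FreeMagma (Fin n), IsLeadingWord D f wf ∧ IsLeadingWord D g wg ∧
    ∃ s : FreeMagma Unit, IsGood s ∧
      (evalWord (fun _ => wf) s = wg ∨ evalWord (fun _ => wg) s = wf)

/-- An elementary automorphism: it fixes all generators but one, which is sent to
`α x_i + f` with `α ≠ 0` and `f` in the subalgebra generated by the other generators. -/
def IsElementary {k : Type*} [Field k] {n : ℕ} {A : Type*} [NonUnitalNonAssocRing A]
    [Module k A] [SMulCommClass k A A] [IsScalarTower k A A]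
    (D : FreeRSData k n A) (e : A →ₙₐ[k] A) : Prop :=
  Function.Bijective e ∧ ∃ i : Fin n,
    (∀ j : Fin n, j ≠ i → e (D.x j) = D.x j) ∧
    ∃ (α : k) (f : A), α ≠ 0 ∧
      f ∈ NonUnitalAlgebra.adjoin k (D.x '' {j | j ≠ i}) ∧
      e (D.x i) = α • D.x i + f

end RS

/-!
The right-symmetric identity rewrites a bad product `(u₁u₂)v` with `v < u₂` as the affine
combination `(u₁v)u₂ + u₁(u₂v) - u₁(vu₂)` of smaller words, and multiplying by a fixed element
on either side carries affine combinations of smaller words to affine combinations of smaller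
words. Since `wlt` is well founded (it embeds into `ℕ` through `rank`), the image of every bad
word `w` therefore lies in the affine span over `ℤ` of the basis vectors of good words `< w`.
Such an element has coordinate sum `1`, so it is nonzero, and all its good words, in particular its
leading word, are `< w`. A good word is its own basis vector.
-/

lemma AffineMap.apply_mem_affineSpan_of_mapsTo {k V₁ P₁ V₂ P₂ : Type*} [Ring k]
    [AddCommGroup V₁] [Module k V₁] [AddTorsor V₁ P₁] [AddCommGroup V₂] [Module k V₂]
    [AddTorsor V₂ P₂] (f : P₁ →ᵃ[k] P₂) {s : Set P₁} {t : Set P₂} (hst : Set.MapsTo f s t)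
    {p : P₁} (hp : p ∈ affineSpan k s) : f p ∈ affineSpan k t :=
  affineSpan_mono k hst.image_subset
    (AffineSubspace.map_span f s ▸ AffineSubspace.mem_map_of_mem f hp)

lemma Module.Basis.ne_zero_of_mem_affineSpan_int {ι R M : Type*} [Ring R] [Nontrivial R]
    [AddCommGroup M] [Module R M] (b : Module.Basis ι R M) {s : Set ι} {f : M}
    (hf : f ∈ affineSpan ℤ (b '' s)) : f ≠ 0 := by
  have h : b.sumCoords f ∈ affineSpan ℤ ({1} : Set R) :=
    b.sumCoords.toAddMonoidHom.toIntLinearMap.toAffineMap.apply_mem_affineSpan_of_mapsTo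
      (by rintro _ ⟨i, -, rfl⟩; exact b.sumCoords_self_apply i) hf
  rintro rfl
  simp at h

namespace RS

open FreeMagma (of mul)

lemma one_le_deg {X : Type*} (w : FreeMagma X) : 1 ≤ deg w := by
  induction w using FreeMagma.rec with
  | of a => simp [deg]
  | mul u v hu _ => simp only [deg]; omega

section WordOrder

variable {X : Type*} [LinearOrder X]

lemma deg_le_of_wlt {u v : FreeMagma X} (h : wlt u v) : deg u ≤ deg v := by
  cases u with
  | of a => exact one_le_deg v
  | mul u₁ u₂ =>
    cases v with
    | of b => exact h.elim
    | mul v₁ v₂ => rcases h with h | ⟨h, _⟩ <;> omega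

lemma wlt_of_deg_lt {u v : FreeMagma X} (h : deg u < deg v) : wlt u v := by
  cases v with
  | of b => have := one_le_deg u; simp only [deg] at h; omega
  | mul v₁ v₂ =>
    cases u with
    | of a => trivial
    | mul u₁ u₂ => exact Or.inl h

lemma wlt_mul_mul_of_wlt {a b c d : FreeMagma X} (hdeg : deg (mul a b) = deg (mul c d))
    (h : wlt a c) : wlt (mul a b) (mul c d) :=
  Or.inr ⟨hdeg, Or.inl h⟩

lemma wlt_mul_left {s u : FreeMagma X} (v : FreeMagma X) (h : wlt s u) :
    wlt (mul s v) (mul u v) := by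
  rcases (deg_le_of_wlt h).lt_or_eq with hd | hd
  · exact wlt_of_deg_lt (by simp only [deg]; omega)
  · exact wlt_mul_mul_of_wlt (by simp only [deg]; omega) h

lemma wlt_mul_right (u : FreeMagma X) {t v : FreeMagma X} (h : wlt t v) :
    wlt (mul u t) (mul u v) := by
  rcases (deg_le_of_wlt h).lt_or_eq with hd | hd
  · exact wlt_of_deg_lt (by simp only [deg]; omega)
  · exact Or.inr ⟨by simp only [deg]; omega, Or.inr ⟨rfl, h⟩⟩

lemma wlt_left_mul (u v : FreeMagma X) : wlt u (mul u v) :=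
  wlt_of_deg_lt (by have := one_le_deg v; simp only [deg]; omega)

lemma wlt_trichotomy (u v : FreeMagma X) : wlt u v ∨ u = v ∨ wlt v u := by
  induction u using FreeMagma.rec generalizing v with
  | of a =>
    cases v with
    | of b =>
      rcases lt_trichotomy a b with h | rfl | h
      exacts [Or.inl h, Or.inr (Or.inl rfl), Or.inr (Or.inr h)]
    | mul v₁ v₂ => exact Or.inl trivial
  | mul u₁ u₂ ih₁ ih₂ =>
    cases v with
    | of b => exact Or.inr (Or.inr trivial)
    | mul v₁ v₂ =>
      rcases Nat.lt_trichotomy (deg (mul u₁ u₂)) (deg (mul v₁ v₂)) with h | h | h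
      · exact Or.inl (Or.inl h)
      · rcases ih₁ v₁ with h₁ | rfl | h₁
        · exact Or.inl (Or.inr ⟨h, Or.inl h₁⟩)
        · rcases ih₂ v₂ with h₂ | rfl | h₂
          · exact Or.inl (Or.inr ⟨h, Or.inr ⟨rfl, h₂⟩⟩)
          · exact Or.inr (Or.inl rfl)
          · exact Or.inr (Or.inr (Or.inr ⟨h.symm, Or.inr ⟨rfl, h₂⟩⟩))
        · exact Or.inr (Or.inr (Or.inr ⟨h.symm, Or.inl h₁⟩))
      · exact Or.inr (Or.inr (Or.inl h))

end WordOrder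

section Rank

variable {n : ℕ}

def rankBound (n : ℕ) : ℕ → ℕ
  | 0 => n + 1
  | d + 1 => rankBound n d * rankBound n d

lemma rankBound_mono (n : ℕ) : Monotone (rankBound n) :=
  monotone_nat_of_le_succ fun _ => Nat.le_mul_self _

/-- A mixed-radix encoding: a word of degree `d + 1` has rank below `rankBound n d`, while a
product of degree `d + 2` has rank at least `rankBound n d`. -/
def rank : FreeMagma (Fin n) → ℕ
  | .of a => a + 1
  | .mul u v => rank u * rankBound n (deg u + deg v - 2) + rank v

lemma one_le_rank (w : FreeMagma (Fin n)) : 1 ≤ rank w := by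
  cases w with
  | of a => simp [rank]
  | mul u v => simp only [rank]; have := one_le_rank v; omega

lemma rank_lt_rankBound (w : FreeMagma (Fin n)) : rank w < rankBound n (deg w - 1) := by
  induction w using FreeMagma.rec with
  | of a => have := a.isLt; simp only [rank, deg, Nat.sub_self, rankBound]; omega
  | mul u v ihu ihv =>
    have := one_le_deg u
    have := one_le_deg v
    set M := rankBound n (deg u + deg v - 2)
    have hu : rank u < M := ihu.trans_le (rankBound_mono n (by omega))
    have hv : rank v < M := ihv.trans_le (rankBound_mono n (by omega))
    have hdeg : deg (mul u v) - 1 = (deg u + deg v - 2) + 1 := by simp only [deg]; omega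
    rw [hdeg]
    calc rank u * M + rank v < (rank u + 1) * M := by rw [add_mul, one_mul]; omega
      _ ≤ M * M := Nat.mul_le_mul_right _ hu

lemma rank_lt_rank_of_deg_lt {u v : FreeMagma (Fin n)} (h : deg u < deg v) :
    rank u < rank v := by
  cases v with
  | of a => have := one_le_deg u; simp only [deg] at h; omega
  | mul v₁ v₂ =>
    have hbound : rankBound n (deg u - 1) ≤ rankBound n (deg v₁ + deg v₂ - 2) :=
      rankBound_mono n (by simp only [deg] at h; omega)
    calc rank u < rankBound n (deg u - 1) := rank_lt_rankBound u
      _ ≤ rank v₁ * rankBound n (deg v₁ + deg v₂ - 2) :=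
        hbound.trans (Nat.le_mul_of_pos_left _ (one_le_rank v₁))
      _ ≤ rank (mul v₁ v₂) := Nat.le_add_right _ _

lemma rank_lt_rank_of_wlt {u v : FreeMagma (Fin n)} (h : wlt u v) : rank u < rank v := by
  induction u using FreeMagma.rec generalizing v with
  | of a =>
    cases v with
    | of b => exact Nat.add_lt_add_right (Fin.lt_def.mp h) 1
    | mul v₁ v₂ =>
      have := one_le_deg v₁
      have := one_le_deg v₂
      exact rank_lt_rank_of_deg_lt (by simp only [deg]; omega)
  | mul u₁ u₂ ih₁ ih₂ =>
    cases v with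
    | of b => exact h.elim
    | mul v₁ v₂ =>
      rcases h with h | ⟨hdeg, h | ⟨rfl, h⟩⟩
      · exact rank_lt_rank_of_deg_lt h
      · simp only [deg] at hdeg
        have hu₂ : rank u₂ < rankBound n (deg u₁ + deg u₂ - 2) :=
          (rank_lt_rankBound u₂).trans_le (rankBound_mono n (by have := one_le_deg u₁; omega))
        simp only [rank, show deg v₁ + deg v₂ = deg u₁ + deg u₂ by omega]
        calc rank u₁ * _ + rank u₂ < (rank u₁ + 1) * _ := by rw [add_mul, one_mul]; omega
          _ ≤ rank v₁ * _ := Nat.mul_le_mul_right _ (ih₁ h)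
          _ ≤ _ := Nat.le_add_right _ _
      · simp only [deg] at hdeg
        simp only [rank, show deg v₂ = deg u₂ by omega]
        have := ih₂ h
        omega

lemma wlt_iff_rank_lt {u v : FreeMagma (Fin n)} : wlt u v ↔ rank u < rank v := by
  refine ⟨rank_lt_rank_of_wlt, fun h => ?_⟩
  rcases wlt_trichotomy u v with huv | rfl | hvu
  · exact huv
  · exact absurd h (lt_irrefl _)
  · exact absurd (rank_lt_rank_of_wlt hvu) h.not_gt

lemma wlt_irrefl (w : FreeMagma (Fin n)) : ¬ wlt w w := by
  rw [wlt_iff_rank_lt]; exact lt_irrefl _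

lemma wlt_trans {u v w : FreeMagma (Fin n)} (huv : wlt u v) (hvw : wlt v w) : wlt u w := by
  rw [wlt_iff_rank_lt] at *; exact huv.trans hvw

lemma wlt_wellFounded : WellFounded (wlt : FreeMagma (Fin n) → FreeMagma (Fin n) → Prop) :=
  Subrelation.wf rank_lt_rank_of_wlt (InvImage.wf rank wellFounded_lt)

end Rank

section RightSymmetric

variable {X : Type*} [LinearOrder X] {A : Type*} [NonUnitalNonAssocRing A]

theorem evalWord_mem_affineSpan_of_not_isGood
    (hA : ∀ a b c : A, (a * b) * c - a * (b * c) = (a * c) * b - a * (c * b)) (x : X → A)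
    {w : FreeMagma X} (hw : ¬ IsGood w) :
    evalWord x w ∈ affineSpan ℤ (evalWord x '' {w' | wlt w' w}) := by
  induction w using FreeMagma.rec with
  | of a => exact (hw trivial).elim
  | mul u v ihu ihv =>
    by_cases hu : IsGood u
    · by_cases hv : IsGood v
      · cases u using FreeMagma.rec with
        | of a => exact (hw hv).elim
        | mul u₁ u₂ =>
          have hvu : wlt v u₂ := by_contra fun h => hw ⟨hu, hv, h⟩
          have hrel : evalWord x (mul (mul u₁ u₂) v) =
              (1 : ℤ) • (evalWord x (mul (mul u₁ v) u₂) -ᵥ evalWord x (mul u₁ (mul v u₂))) +ᵥ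
                evalWord x (mul u₁ (mul u₂ v)) := by
            simp only [evalWord, one_smul, vsub_eq_sub, vadd_eq_add]
            rw [← hA, sub_add_cancel]
          rw [hrel]
          refine AffineSubspace.smul_vsub_vadd_mem _ _ (mem_affineSpan ℤ ⟨_, ?_, rfl⟩)
            (mem_affineSpan ℤ ⟨_, ?_, rfl⟩) (mem_affineSpan ℤ ⟨_, ?_, rfl⟩)
          · exact wlt_mul_mul_of_wlt (by simp only [deg]; omega) (wlt_mul_right u₁ hvu)
          · exact wlt_mul_mul_of_wlt (by simp only [deg]; omega) (wlt_left_mul u₁ u₂)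
          · exact wlt_mul_mul_of_wlt (by simp only [deg]; omega) (wlt_left_mul u₁ u₂)
      · exact (AddMonoidHom.mulLeft (evalWord x u)).toIntLinearMap.toAffineMap
          |>.apply_mem_affineSpan_of_mapsTo
            (by rintro _ ⟨t, ht, rfl⟩; exact ⟨mul u t, wlt_mul_right u ht, rfl⟩) (ihv hv)
    · exact (AddMonoidHom.mulRight (evalWord x v)).toIntLinearMap.toAffineMap
        |>.apply_mem_affineSpan_of_mapsTo
          (by rintro _ ⟨s, hs, rfl⟩; exact ⟨mul s v, wlt_mul_left v hs, rfl⟩) (ihu hu)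

end RightSymmetric

section FreeRightSymmetric

variable {k : Type*} [Field k] {n : ℕ} {A : Type*} [NonUnitalNonAssocRing A] [Module k A]
  (D : FreeRSData k n A)

lemma FreeRSData.evalWord_eq_basis {w : FreeMagma (Fin n)} (hw : IsGood w) :
    evalWord D.x w = D.basis ⟨w, hw⟩ :=
  (D.basis_eq ⟨w, hw⟩).symm

theorem evalWord_mem_affineSpan_basis {w : FreeMagma (Fin n)} (hw : ¬ IsGood w) :
    evalWord D.x w ∈ affineSpan ℤ (D.basis '' {u | wlt u.1 w}) := by
  induction w using wlt_wellFounded.induction with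
  | _ w ih =>
    refine affineSpan_le.mpr ?_ (evalWord_mem_affineSpan_of_not_isGood D.rightSymm D.x hw)
    rintro _ ⟨w', hw'w, rfl⟩
    by_cases hg : IsGood w'
    · exact subset_affineSpan ℤ _ ⟨⟨w', hg⟩, hw'w, D.basis_eq _⟩
    · exact affineSpan_mono ℤ (Set.image_mono fun u hu => wlt_trans hu hw'w) (ih w' hw'w hg)

lemma exists_isLeadingWord {f : A} (hf : f ≠ 0) : ∃ m, IsLeadingWord D f m := by
  have hsupp : (D.basis.repr f).support.Nonempty := by simpa using hf
  obtain ⟨m, hm, hmax⟩ := Finset.exists_max_image _ (fun u => rank u.1) hsupp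
  refine ⟨m.1, m.2, hm, fun u hu hum => ?_⟩
  rcases wlt_trichotomy u.1 m.1 with h | h | h
  · exact h
  · exact (hum h).elim
  · exact absurd (rank_lt_rank_of_wlt h) (hmax u hu).not_gt

lemma isLeadingWord_evalWord_of_isGood {w : FreeMagma (Fin n)} (hw : IsGood w) :
    IsLeadingWord D (evalWord D.x w) w := by
  refine ⟨hw, ?_, fun u hu huw => ?_⟩ <;>
    rw [D.evalWord_eq_basis hw, D.basis.repr_self, Finsupp.mem_support_single] at *
  · exact ⟨rfl, one_ne_zero⟩
  · exact (huw (congrArg Subtype.val hu.1)).elim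

end FreeRightSymmetric

theorem statement0_general (k : Type*) [Field k] (n : ℕ) (A : Type*) [NonUnitalNonAssocRing A]
    [Module k A]
    (D : FreeRSData k n A) (w : FreeMagma (Fin n)) :
    evalWord D.x w ≠ 0 ∧
      ∃ wb : FreeMagma (Fin n), IsLeadingWord D (evalWord D.x w) wb ∧
        wle wb w ∧ (wb = w ↔ IsGood w) := by
  by_cases hw : IsGood w
  · refine ⟨?_, w, isLeadingWord_evalWord_of_isGood D hw, Or.inr rfl, iff_of_true rfl hw⟩
    rw [D.evalWord_eq_basis hw]
    exact D.basis.ne_zero _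
  · have hmem := evalWord_mem_affineSpan_basis D hw
    have hne : evalWord D.x w ≠ 0 := D.basis.ne_zero_of_mem_affineSpan_int hmem
    obtain ⟨m, hm⟩ := exists_isLeadingWord D hne
    have hspan := Submodule.span_le_restrictScalars ℤ k _ (affineSpan_subset_span hmem)
    have hlt : wlt m w := D.basis.mem_span_image.mp hspan hm.2.1
    exact ⟨hne, m, hm, Or.inl hlt, iff_of_false (fun h => wlt_irrefl w (h ▸ hlt)) hw⟩

/-- Lemma 2.1: for every nonassociative word `w`, its image in the free
right-symmetric algebra `A = RS⟨x_1,…,x_n⟩` is nonzero, its leading word `w̄` satisfies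
`w̄ ≤ w`, and `w̄ = w` if and only if `w` is a good word. -/
theorem statement0 (k : Type*) [Field k] (n : ℕ) (A : Type*) [NonUnitalNonAssocRing A]
    [Module k A] [SMulCommClass k A A] [IsScalarTower k A A]
    (D : FreeRSData k n A) (w : FreeMagma (Fin n)) :
    evalWord D.x w ≠ 0 ∧
      ∃ wb : FreeMagma (Fin n), IsLeadingWord D (evalWord D.x w) wb ∧
        wle wb w ∧ (wb = w ↔ IsGood w) :=
  statement0_general k n A D w

end RS
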